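/- arXiv:0910.2080 — 3 statements merged into one kernel-verified Lean document; each statement's English description precedes it below -/
import Mathlib

section
/- If the torsion field (T_{1,1}², T_{1,2}²) is divergence-free in B and has vanishing normal component on ∂B, then for every φ ∈ C¹(B̄), the total torsion of the rotated frame satisfies 𝒯(Ñ) = 𝒯(N) + 2∫∫_B |∇φ|² dudv ≥ 𝒯(N), with equality iff φ is constant. -/
/-!
Since `div T = 0`, the cross term `T · ∇φ` in `|T + ∇φ|²` equals `div (φ T)`, so by the divergence
theorem its integral over the disc is the boundary flux of `φ T`, which vanishes because
`T · ν = 0`. Hence `𝒯(Ñ) = 𝒯(N) + 2∫|∇φ|²`. The divergence theorem on the disc is reduced to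
the one on the rectangle `[0, 1] × [-π, π]` by polar coordinates. Finally, `∫|∇φ|² = 0` forces the
continuous function `|∇φ|²` to vanish on the open disc, which is connected, so `φ` is constant.
-/

open MeasureTheory Set Real Filter Topology

def openDisc : Set (ℝ × ℝ) := {p | p.1 ^ 2 + p.2 ^ 2 < 1}

def closedDisc : Set (ℝ × ℝ) := {p | p.1 ^ 2 + p.2 ^ 2 ≤ 1}

lemma openDisc_eq_preimage_ball :
    openDisc = Complex.equivRealProdCLM.symm ⁻¹' Metric.ball 0 1 := by
  ext ⟨x, y⟩
  simp [openDisc, Complex.equivRealProdCLM_symm_apply, Complex.norm_def,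
    Complex.normSq_add_mul_I, Real.sqrt_lt' one_pos]

lemma closedDisc_eq_preimage_closedBall :
    closedDisc = Complex.equivRealProdCLM.symm ⁻¹' Metric.closedBall 0 1 := by
  ext ⟨x, y⟩
  simp [closedDisc, Complex.equivRealProdCLM_symm_apply, Complex.norm_def,
    Complex.normSq_add_mul_I]

lemma isOpen_openDisc : IsOpen openDisc := by
  rw [openDisc_eq_preimage_ball]
  exact Metric.isOpen_ball.preimage (by fun_prop)

lemma measurableSet_openDisc : MeasurableSet openDisc :=
  isOpen_openDisc.measurableSet

lemma closure_openDisc : closure openDisc = closedDisc := by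
  rw [openDisc_eq_preimage_ball, closedDisc_eq_preimage_closedBall,
    ← ContinuousLinearEquiv.preimage_closure, closure_ball _ one_ne_zero]

lemma openDisc_subset_closedDisc : openDisc ⊆ closedDisc :=
  closure_openDisc ▸ subset_closure

lemma closedDisc_mem_nhds {w : ℝ × ℝ} (hw : w ∈ openDisc) : closedDisc ∈ 𝓝 w :=
  mem_of_superset (isOpen_openDisc.mem_nhds hw) openDisc_subset_closedDisc

lemma convex_openDisc : Convex ℝ openDisc := by
  rw [openDisc_eq_preimage_ball]
  exact (convex_ball 0 1).linear_preimage Complex.equivRealProdCLM.symm.toLinearMap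

lemma convex_closedDisc : Convex ℝ closedDisc := by
  rw [closedDisc_eq_preimage_closedBall]
  exact (convex_closedBall 0 1).linear_preimage Complex.equivRealProdCLM.symm.toLinearMap

lemma isCompact_closedDisc : IsCompact closedDisc := by
  rw [closedDisc_eq_preimage_closedBall]
  exact Complex.equivRealProdCLM.symm.toHomeomorph.isCompact_preimage.2 (isCompact_closedBall 0 1)

lemma uniqueDiffOn_closedDisc : UniqueDiffOn ℝ closedDisc :=
  uniqueDiffOn_convex convex_closedDisc
    ⟨0, interior_mono openDisc_subset_closedDisc (isOpen_openDisc.interior_eq.symm ▸ by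
      norm_num [openDisc])⟩

lemma integrableOn_openDisc_of_eqOn {E : Type*} [NormedAddCommGroup E] {f g : ℝ × ℝ → E}
    (hg : ContinuousOn g closedDisc) (hfg : EqOn f g openDisc) : IntegrableOn f openDisc :=
  ((hg.integrableOn_compact isCompact_closedDisc).mono_set openDisc_subset_closedDisc).congr_fun
    hfg.symm measurableSet_openDisc

section ContDiffOnClosedDisc

variable {E : Type*} [NormedAddCommGroup E] [NormedSpace ℝ E] {f : ℝ × ℝ → E}

lemma fderivWithin_closedDisc {w : ℝ × ℝ} (hw : w ∈ openDisc) :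
    fderivWithin ℝ f closedDisc w = fderiv ℝ f w :=
  fderivWithin_of_mem_nhds (closedDisc_mem_nhds hw)

lemma ContDiffOn.differentiableAt_of_mem_openDisc (hf : ContDiffOn ℝ 1 f closedDisc)
    {w : ℝ × ℝ} (hw : w ∈ openDisc) : DifferentiableAt ℝ f w :=
  (hf.differentiableOn one_ne_zero).differentiableAt (closedDisc_mem_nhds hw)

lemma ContDiffOn.continuousOn_fderivWithin_closedDisc_apply (hf : ContDiffOn ℝ 1 f closedDisc)
    (v : ℝ × ℝ) : ContinuousOn (fun w => fderivWithin ℝ f closedDisc w v) closedDisc :=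
  (hf.continuousOn_fderivWithin uniqueDiffOn_closedDisc le_rfl).clm_apply continuousOn_const

end ContDiffOnClosedDisc

lemma ContinuousLinearMap.map_prodMk (L : ℝ × ℝ →L[ℝ] ℝ) (x y : ℝ) :
    L (x, y) = x * L (1, 0) + y * L (0, 1) := by
  rw [← smul_eq_mul x, ← smul_eq_mul y, ← L.map_smul, ← L.map_smul, ← L.map_add]
  simp

lemma ContinuousLinearMap.eq_zero_of_sq_add_sq_eq_zero {L : ℝ × ℝ →L[ℝ] ℝ}
    (h : L (1, 0) ^ 2 + L (0, 1) ^ 2 = 0) : L = 0 := by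
  have h₁ : L (1, 0) = 0 := by nlinarith [sq_nonneg (L (1, 0)), sq_nonneg (L (0, 1))]
  have h₂ : L (0, 1) = 0 := by nlinarith [sq_nonneg (L (1, 0)), sq_nonneg (L (0, 1))]
  ext <;> simp [h₁, h₂]

lemma Ioo_prod_Ioo_ae_eq_Icc (a₁ b₁ a₂ b₂ : ℝ) :
    Ioo a₁ b₁ ×ˢ Ioo a₂ b₂ =ᵐ[volume] Icc (a₁, a₂) (b₁, b₂) := by
  rw [← Icc_prod_Icc]
  exact Measure.set_prod_ae_eq Ioo_ae_eq_Icc Ioo_ae_eq_Icc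

lemma polarCoord_symm_fst_sq_add_snd_sq (q : ℝ × ℝ) :
    (polarCoord.symm q).1 ^ 2 + (polarCoord.symm q).2 ^ 2 = q.1 ^ 2 := by
  simp only [polarCoord_symm_apply]
  linear_combination q.1 ^ 2 * sin_sq_add_cos_sq q.2

lemma polarCoord_target_inter_preimage_openDisc :
    polarCoord.target ∩ polarCoord.symm ⁻¹' openDisc = Ioo 0 1 ×ˢ Ioo (-π) π := by
  ext q
  simp only [polarCoord_target, mem_inter_iff, mem_prod, mem_preimage, openDisc, mem_ofPred_eq,
    polarCoord_symm_fst_sq_add_snd_sq, mem_Ioi, mem_Ioo]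
  constructor
  · rintro ⟨⟨hr, hθ⟩, hr1⟩
    exact ⟨⟨hr, by nlinarith⟩, hθ⟩
  · rintro ⟨⟨hr, hr1⟩, hθ⟩
    exact ⟨⟨hr, hθ⟩, by nlinarith⟩

lemma mapsTo_polarCoord_symm_closedDisc :
    MapsTo polarCoord.symm (Icc ((0 : ℝ), -π) (1, π)) closedDisc := by
  intro q hq
  have hr : 0 ≤ q.1 ∧ q.1 ≤ 1 := ⟨hq.1.1, hq.2.1⟩
  show (polarCoord.symm q).1 ^ 2 + (polarCoord.symm q).2 ^ 2 ≤ 1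
  rw [polarCoord_symm_fst_sq_add_snd_sq]
  nlinarith

lemma setIntegral_openDisc_eq_polar {E : Type*} [NormedAddCommGroup E] [NormedSpace ℝ E]
    (f : ℝ × ℝ → E) :
    ∫ w in openDisc, f w = ∫ q in Ioo 0 1 ×ˢ Ioo (-π) π, q.1 • f (polarCoord.symm q) := by
  rw [← integral_indicator measurableSet_openDisc, ← integral_comp_polarCoord_symm,
    ← polarCoord_target_inter_preimage_openDisc, ← setIntegral_indicator
      (measurableSet_openDisc.preimage continuous_polarCoord_symm.measurable)]
  simp_rw [indicator_smul_apply, ← indicator_comp_right]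
  rfl

@[fun_prop]
lemma differentiable_polarCoord_symm : Differentiable ℝ polarCoord.symm :=
  fun q => (hasFDerivAt_polarCoord_symm q).differentiableAt

lemma fderivPolarCoordSymm_apply (q v : ℝ × ℝ) :
    fderivPolarCoordSymm q v =
      (cos q.2 * v.1 - q.1 * sin q.2 * v.2, sin q.2 * v.1 + q.1 * cos q.2 * v.2) := by
  simp only [fderivPolarCoordSymm, LinearMap.coe_toContinuousLinearMap',
    Matrix.toLin_finTwoProd_apply]
  ring_nf

/- In polar coordinates `(r, θ)` the field `F` becomes `(r F·e_r, F·e_θ)`, whose divergence is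
`r (div F)(r cos θ, r sin θ)`. -/
noncomputable def polarRadialFlux (F₁ F₂ : ℝ × ℝ → ℝ) (q : ℝ × ℝ) : ℝ :=
  q.1 * (F₁ (polarCoord.symm q) * cos q.2 + F₂ (polarCoord.symm q) * sin q.2)

noncomputable def polarAngularFlux (F₁ F₂ : ℝ × ℝ → ℝ) (q : ℝ × ℝ) : ℝ :=
  F₂ (polarCoord.symm q) * cos q.2 - F₁ (polarCoord.symm q) * sin q.2

section PolarFlux

variable {F₁ F₂ : ℝ × ℝ → ℝ} {q : ℝ × ℝ}

lemma differentiableAt_polarRadialFlux (h₁ : DifferentiableAt ℝ F₁ (polarCoord.symm q))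
    (h₂ : DifferentiableAt ℝ F₂ (polarCoord.symm q)) :
    DifferentiableAt ℝ (polarRadialFlux F₁ F₂) q := by
  unfold polarRadialFlux
  fun_prop

lemma differentiableAt_polarAngularFlux (h₁ : DifferentiableAt ℝ F₁ (polarCoord.symm q))
    (h₂ : DifferentiableAt ℝ F₂ (polarCoord.symm q)) :
    DifferentiableAt ℝ (polarAngularFlux F₁ F₂) q := by
  unfold polarAngularFlux
  fun_prop

lemma fderiv_polarRadialFlux_add_fderiv_polarAngularFlux
    (h₁ : DifferentiableAt ℝ F₁ (polarCoord.symm q))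
    (h₂ : DifferentiableAt ℝ F₂ (polarCoord.symm q)) :
    fderiv ℝ (polarRadialFlux F₁ F₂) q (1, 0) + fderiv ℝ (polarAngularFlux F₁ F₂) q (0, 1) =
      q.1 * (fderiv ℝ F₁ (polarCoord.symm q) (1, 0) + fderiv ℝ F₂ (polarCoord.symm q) (0, 1)) := by
  have hF₁ := h₁.hasFDerivAt.comp q (hasFDerivAt_polarCoord_symm q)
  have hF₂ := h₂.hasFDerivAt.comp q (hasFDerivAt_polarCoord_symm q)
  have hcos := (hasDerivAt_cos q.2).comp_hasFDerivAt q (hasFDerivAt_snd (𝕜 := ℝ) (p := q))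
  have hsin := (hasDerivAt_sin q.2).comp_hasFDerivAt q (hasFDerivAt_snd (𝕜 := ℝ) (p := q))
  have hR : HasFDerivAt (polarRadialFlux F₁ F₂) _ q :=
    hasFDerivAt_fst.mul ((hF₁.mul hcos).add (hF₂.mul hsin))
  have hA : HasFDerivAt (polarAngularFlux F₁ F₂) _ q := (hF₂.mul hcos).sub (hF₁.mul hsin)
  rw [hR.fderiv, hA.fderiv]
  set D₁ := fderiv ℝ F₁ (polarCoord.symm q)
  set D₂ := fderiv ℝ F₂ (polarCoord.symm q)
  simp only [Function.comp_apply, polarCoord_symm_apply, neg_smul, smul_neg, smul_add, add_apply,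
    neg_apply, smul_apply, ContinuousLinearMap.coe_snd', smul_eq_mul, mul_zero, neg_zero,
    ContinuousLinearMap.comp_apply, fderivPolarCoordSymm_apply, mul_one, sub_zero, add_zero,
    zero_add, ContinuousLinearMap.coe_fst', sub_apply, zero_sub]
  linear_combination (q.1 * cos q.2) * D₁.map_prodMk (cos q.2) (sin q.2)
    + (q.1 * sin q.2) * D₂.map_prodMk (cos q.2) (sin q.2)
    + cos q.2 * D₂.map_prodMk (-(q.1 * sin q.2)) (q.1 * cos q.2)
    - sin q.2 * D₁.map_prodMk (-(q.1 * sin q.2)) (q.1 * cos q.2)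
    + q.1 * (D₁ (1, 0) + D₂ (0, 1)) * sin_sq_add_cos_sq q.2

lemma continuousOn_polarRadialFlux (h₁ : ContinuousOn F₁ closedDisc)
    (h₂ : ContinuousOn F₂ closedDisc) :
    ContinuousOn (polarRadialFlux F₁ F₂) (Icc (0, -π) (1, π)) := by
  unfold polarRadialFlux
  fun_prop (disch := exact mapsTo_polarCoord_symm_closedDisc)

lemma continuousOn_polarAngularFlux (h₁ : ContinuousOn F₁ closedDisc)
    (h₂ : ContinuousOn F₂ closedDisc) :
    ContinuousOn (polarAngularFlux F₁ F₂) (Icc (0, -π) (1, π)) := by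
  unfold polarAngularFlux
  fun_prop (disch := exact mapsTo_polarCoord_symm_closedDisc)

end PolarFlux

/- `fderiv` is junk on the boundary circle; taking derivatives within the closed disc gives a
divergence that is continuous up to the boundary. -/
noncomputable def closedDiscDivergence (F₁ F₂ : ℝ × ℝ → ℝ) (w : ℝ × ℝ) : ℝ :=
  fderivWithin ℝ F₁ closedDisc w (1, 0) + fderivWithin ℝ F₂ closedDisc w (0, 1)

section Divergence

variable {F₁ F₂ : ℝ × ℝ → ℝ}

lemma closedDiscDivergence_of_mem_openDisc {w : ℝ × ℝ} (hw : w ∈ openDisc) :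
    closedDiscDivergence F₁ F₂ w = fderiv ℝ F₁ w (1, 0) + fderiv ℝ F₂ w (0, 1) := by
  simp only [closedDiscDivergence, fderivWithin_closedDisc hw]

lemma continuousOn_closedDiscDivergence (h₁ : ContDiffOn ℝ 1 F₁ closedDisc)
    (h₂ : ContDiffOn ℝ 1 F₂ closedDisc) :
    ContinuousOn (closedDiscDivergence F₁ F₂) closedDisc :=
  (h₁.continuousOn_fderivWithin_closedDisc_apply _).add
    (h₂.continuousOn_fderivWithin_closedDisc_apply _)

lemma polarCoord_symm_mem_openDisc {q : ℝ × ℝ} (hq : q ∈ Ioo 0 1 ×ˢ Ioo (-π) π) :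
    polarCoord.symm q ∈ openDisc :=
  (polarCoord_target_inter_preimage_openDisc.superset hq).2

lemma fderiv_polarFlux_eq_closedDiscDivergence (h₁ : ContDiffOn ℝ 1 F₁ closedDisc)
    (h₂ : ContDiffOn ℝ 1 F₂ closedDisc) {q : ℝ × ℝ} (hq : q ∈ Ioo 0 1 ×ˢ Ioo (-π) π) :
    fderiv ℝ (polarRadialFlux F₁ F₂) q (1, 0) + fderiv ℝ (polarAngularFlux F₁ F₂) q (0, 1) =
      q.1 * closedDiscDivergence F₁ F₂ (polarCoord.symm q) := by
  have hw := polarCoord_symm_mem_openDisc hq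
  rw [fderiv_polarRadialFlux_add_fderiv_polarAngularFlux
    (h₁.differentiableAt_of_mem_openDisc hw) (h₂.differentiableAt_of_mem_openDisc hw),
    closedDiscDivergence_of_mem_openDisc hw]

lemma integrableOn_fderiv_polarFlux (h₁ : ContDiffOn ℝ 1 F₁ closedDisc)
    (h₂ : ContDiffOn ℝ 1 F₂ closedDisc) :
    IntegrableOn (fun q => fderiv ℝ (polarRadialFlux F₁ F₂) q (1, 0)
      + fderiv ℝ (polarAngularFlux F₁ F₂) q (0, 1)) (Icc (0, -π) (1, π)) := by
  refine IntegrableOn.congr_set_ae ?_ (Ioo_prod_Ioo_ae_eq_Icc _ _ _ _).symm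
  refine IntegrableOn.congr_fun ?_
    (fun q hq => (fderiv_polarFlux_eq_closedDiscDivergence h₁ h₂ hq).symm)
    (measurableSet_Ioo.prod measurableSet_Ioo)
  refine (ContinuousOn.integrableOn_compact (isCompact_Icc (a := ((0 : ℝ), -π)) (b := (1, π)))
    ?_).mono_set fun q hq => ⟨⟨hq.1.1.le, hq.2.1.le⟩, ⟨hq.1.2.le, hq.2.2.le⟩⟩
  exact continuousOn_fst.mul ((continuousOn_closedDiscDivergence h₁ h₂).comp
    continuous_polarCoord_symm.continuousOn mapsTo_polarCoord_symm_closedDisc)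

theorem integral_divergence_openDisc (h₁ : ContDiffOn ℝ 1 F₁ closedDisc)
    (h₂ : ContDiffOn ℝ 1 F₂ closedDisc) :
    ∫ w in openDisc, (fderiv ℝ F₁ w (1, 0) + fderiv ℝ F₂ w (0, 1)) =
      ∫ θ in -π..π, (F₁ (cos θ, sin θ) * cos θ + F₂ (cos θ, sin θ) * sin θ) := by
  set R : Set (ℝ × ℝ) := Ioo 0 1 ×ˢ Ioo (-π) π
  set divF := closedDiscDivergence F₁ F₂
  have hd₁ : ∀ q ∈ R, DifferentiableAt ℝ F₁ (polarCoord.symm q) := fun q hq =>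
    h₁.differentiableAt_of_mem_openDisc (polarCoord_symm_mem_openDisc hq)
  have hd₂ : ∀ q ∈ R, DifferentiableAt ℝ F₂ (polarCoord.symm q) := fun q hq =>
    h₂.differentiableAt_of_mem_openDisc (polarCoord_symm_mem_openDisc hq)
  calc ∫ w in openDisc, (fderiv ℝ F₁ w (1, 0) + fderiv ℝ F₂ w (0, 1))
      = ∫ w in openDisc, divF w := setIntegral_congr_fun measurableSet_openDisc
        fun w hw => (closedDiscDivergence_of_mem_openDisc hw).symm
    _ = ∫ q in R, q.1 * divF (polarCoord.symm q) := setIntegral_openDisc_eq_polar divF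
    _ = ∫ q in R, (fderiv ℝ (polarRadialFlux F₁ F₂) q (1, 0)
          + fderiv ℝ (polarAngularFlux F₁ F₂) q (0, 1)) :=
        setIntegral_congr_fun (measurableSet_Ioo.prod measurableSet_Ioo) fun q hq =>
          (fderiv_polarFlux_eq_closedDiscDivergence h₁ h₂ hq).symm
    _ = ∫ q in Icc (0, -π) (1, π), (fderiv ℝ (polarRadialFlux F₁ F₂) q (1, 0)
          + fderiv ℝ (polarAngularFlux F₁ F₂) q (0, 1)) :=
        setIntegral_congr_set (Ioo_prod_Ioo_ae_eq_Icc _ _ _ _)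
    _ = _ := integral_divergence_prod_Icc_of_hasFDerivAt_of_le _ _ _ _ (0, -π) (1, π)
          ⟨zero_le_one, by linarith [pi_pos]⟩
          (continuousOn_polarRadialFlux h₁.continuousOn h₂.continuousOn)
          (continuousOn_polarAngularFlux h₁.continuousOn h₂.continuousOn)
          (fun q hq => (differentiableAt_polarRadialFlux (hd₁ q hq) (hd₂ q hq)).hasFDerivAt)
          (fun q hq => (differentiableAt_polarAngularFlux (hd₁ q hq) (hd₂ q hq)).hasFDerivAt)
          (integrableOn_fderiv_polarFlux h₁ h₂)
    _ = _ := by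
      -- the edges `θ = ±π` cancel and the edge `r = 0` contributes nothing
      simp only [polarAngularFlux, polarRadialFlux, polarCoord_symm_apply, cos_pi, sin_pi,
        cos_neg, sin_neg, neg_zero, mul_neg, mul_one, mul_zero, zero_mul, one_mul, sub_zero,
        sub_self, zero_add, intervalIntegral.integral_zero]

end Divergence

section Torsion

variable {T₁ T₂ φ : ℝ × ℝ → ℝ}

theorem integral_mul_fderiv_eq_zero_of_divergence_free (hT₁ : ContDiffOn ℝ 1 T₁ closedDisc)
    (hT₂ : ContDiffOn ℝ 1 T₂ closedDisc) (hφ : ContDiffOn ℝ 1 φ closedDisc)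
    (hdiv : ∀ w ∈ openDisc, fderiv ℝ T₁ w (1, 0) + fderiv ℝ T₂ w (0, 1) = 0)
    (hbd : ∀ w : ℝ × ℝ, w.1 ^ 2 + w.2 ^ 2 = 1 → w.1 * T₁ w + w.2 * T₂ w = 0) :
    ∫ w in openDisc, (T₁ w * fderiv ℝ φ w (1, 0) + T₂ w * fderiv ℝ φ w (0, 1)) = 0 := by
  have hflux := integral_divergence_openDisc (hφ.mul hT₁) (hφ.mul hT₂)
  calc ∫ w in openDisc, (T₁ w * fderiv ℝ φ w (1, 0) + T₂ w * fderiv ℝ φ w (0, 1))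
      = ∫ w in openDisc, (fderiv ℝ (fun w => φ w * T₁ w) w (1, 0)
          + fderiv ℝ (fun w => φ w * T₂ w) w (0, 1)) := by
        refine setIntegral_congr_fun measurableSet_openDisc fun w hw => ?_
        have hφw := hφ.differentiableAt_of_mem_openDisc hw
        rw [fderiv_fun_mul hφw (hT₁.differentiableAt_of_mem_openDisc hw),
          fderiv_fun_mul hφw (hT₂.differentiableAt_of_mem_openDisc hw)]
        simp only [add_apply, smul_apply, smul_eq_mul]
        linear_combination (-φ w) * hdiv w hw
    _ = 0 := by
        have hnormal : ∀ θ : ℝ, φ (cos θ, sin θ) * T₁ (cos θ, sin θ) * cos θ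
            + φ (cos θ, sin θ) * T₂ (cos θ, sin θ) * sin θ = 0 := fun θ => by
          linear_combination φ (cos θ, sin θ) * hbd (cos θ, sin θ) (cos_sq_add_sin_sq θ)
        simp only [hflux, hnormal, intervalIntegral.integral_zero]

lemma integrableOn_fderiv_sq_add_sq (hφ : ContDiffOn ℝ 1 φ closedDisc) :
    IntegrableOn (fun w => fderiv ℝ φ w (1, 0) ^ 2 + fderiv ℝ φ w (0, 1) ^ 2) openDisc :=
  integrableOn_openDisc_of_eqOn (g := fun w =>
      fderivWithin ℝ φ closedDisc w (1, 0) ^ 2 + fderivWithin ℝ φ closedDisc w (0, 1) ^ 2)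
    (((hφ.continuousOn_fderivWithin_closedDisc_apply _).pow 2).add
      ((hφ.continuousOn_fderivWithin_closedDisc_apply _).pow 2))
    fun w hw => by simp only [fderivWithin_closedDisc hw]

theorem integral_add_fderiv_sq (hT₁ : ContDiffOn ℝ 1 T₁ closedDisc)
    (hT₂ : ContDiffOn ℝ 1 T₂ closedDisc) (hφ : ContDiffOn ℝ 1 φ closedDisc) :
    ∫ w in openDisc, ((T₁ w + fderiv ℝ φ w (1, 0)) ^ 2 + (T₂ w + fderiv ℝ φ w (0, 1)) ^ 2) =
      (∫ w in openDisc, (T₁ w ^ 2 + T₂ w ^ 2))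
        + 2 * (∫ w in openDisc, (T₁ w * fderiv ℝ φ w (1, 0) + T₂ w * fderiv ℝ φ w (0, 1)))
        + ∫ w in openDisc, (fderiv ℝ φ w (1, 0) ^ 2 + fderiv ℝ φ w (0, 1) ^ 2) := by
  have hφ₁ := hφ.continuousOn_fderivWithin_closedDisc_apply (1, 0)
  have hφ₂ := hφ.continuousOn_fderivWithin_closedDisc_apply (0, 1)
  have hT : IntegrableOn (fun w => T₁ w ^ 2 + T₂ w ^ 2) openDisc :=
    integrableOn_openDisc_of_eqOn ((hT₁.continuousOn.pow 2).add (hT₂.continuousOn.pow 2))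
      fun _ _ => rfl
  have hTφ : IntegrableOn
      (fun w => T₁ w * fderiv ℝ φ w (1, 0) + T₂ w * fderiv ℝ φ w (0, 1)) openDisc :=
    integrableOn_openDisc_of_eqOn ((hT₁.continuousOn.mul hφ₁).add (hT₂.continuousOn.mul hφ₂))
      fun w hw => by simp [fderivWithin_closedDisc hw]
  calc _ = ∫ w in openDisc, ((T₁ w ^ 2 + T₂ w ^ 2)
          + 2 * (T₁ w * fderiv ℝ φ w (1, 0) + T₂ w * fderiv ℝ φ w (0, 1))
          + (fderiv ℝ φ w (1, 0) ^ 2 + fderiv ℝ φ w (0, 1) ^ 2)) :=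
        integral_congr_ae (ae_of_all _ fun w => by ring)
    _ = _ := by
      rw [integral_add _ (integrableOn_fderiv_sq_add_sq hφ), integral_add hT (hTφ.const_mul 2),
        integral_const_mul]
      exact hT.add (hTφ.const_mul 2)

theorem integral_fderiv_sq_add_sq_eq_zero_iff (hφ : ContDiffOn ℝ 1 φ closedDisc) :
    ∫ w in openDisc, (fderiv ℝ φ w (1, 0) ^ 2 + fderiv ℝ φ w (0, 1) ^ 2) = 0 ↔
      ∃ c, ∀ w ∈ openDisc, φ w = c := by
  have hφ' : ContDiffOn ℝ 1 φ openDisc := hφ.mono openDisc_subset_closedDisc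
  have hcont : ContinuousOn (fun w => fderiv ℝ φ w (1, 0) ^ 2 + fderiv ℝ φ w (0, 1) ^ 2)
      openDisc := by
    have hD := hφ'.continuousOn_fderiv_of_isOpen isOpen_openDisc le_rfl
    fun_prop
  rw [setIntegral_eq_zero_iff_of_nonneg_ae (ae_of_all _ fun w => by positivity)
    (integrableOn_fderiv_sq_add_sq hφ)]
  constructor
  · intro h
    have hzero := Measure.eqOn_open_of_ae_eq h isOpen_openDisc hcont continuousOn_const
    exact isOpen_openDisc.exists_is_const_of_fderiv_eq_zero convex_openDisc.isPreconnected
      (hφ'.differentiableOn one_ne_zero)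
      fun w hw => ContinuousLinearMap.eq_zero_of_sq_add_sq_eq_zero (hzero hw)
  · rintro ⟨c, hc⟩
    filter_upwards [ae_restrict_mem measurableSet_openDisc] with w hw
    have hloc : φ =ᶠ[𝓝 w] fun _ => c := eventually_of_mem (isOpen_openDisc.mem_nhds hw) hc
    simp [hloc.fderiv_eq]

end Torsion

/-- If the torsion field `(T₁,T₂)` is divergence-free in `B` with vanishing
normal component on `∂B`, then for every `φ ∈ C¹(B̄)` the rotated frame has
total torsion `𝒯(Ñ) = 𝒯(N) + 2∫|∇φ|² ≥ 𝒯(N)`, with equality iff `φ` is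
constant. -/
theorem coulomb_frame_minimizes_total_torsion
    (B : Set (ℝ × ℝ)) (hB : B = {p : ℝ × ℝ | p.1 ^ 2 + p.2 ^ 2 < 1})
    (T₁ T₂ φ : ℝ × ℝ → ℝ)
    (hT₁ : ContDiffOn ℝ 1 T₁ (closure B)) (hT₂ : ContDiffOn ℝ 1 T₂ (closure B))
    (hφ : ContDiffOn ℝ 1 φ (closure B))
    (hdiv : ∀ w ∈ B, fderiv ℝ T₁ w (1, 0) + fderiv ℝ T₂ w (0, 1) = 0)
    (hbd : ∀ w : ℝ × ℝ, w.1 ^ 2 + w.2 ^ 2 = 1 → w.1 * T₁ w + w.2 * T₂ w = 0) :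
    ((2 * ∫ w in B, ((T₁ w + fderiv ℝ φ w (1, 0)) ^ 2
          + (T₂ w + fderiv ℝ φ w (0, 1)) ^ 2))
        = (2 * ∫ w in B, ((T₁ w) ^ 2 + (T₂ w) ^ 2))
          + 2 * ∫ w in B, ((fderiv ℝ φ w (1, 0)) ^ 2
              + (fderiv ℝ φ w (0, 1)) ^ 2))
    ∧ ((2 * ∫ w in B, ((T₁ w + fderiv ℝ φ w (1, 0)) ^ 2
          + (T₂ w + fderiv ℝ φ w (0, 1)) ^ 2))
        ≥ 2 * ∫ w in B, ((T₁ w) ^ 2 + (T₂ w) ^ 2))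
    ∧ ((2 * ∫ w in B, ((T₁ w + fderiv ℝ φ w (1, 0)) ^ 2
          + (T₂ w + fderiv ℝ φ w (0, 1)) ^ 2))
        = (2 * ∫ w in B, ((T₁ w) ^ 2 + (T₂ w) ^ 2))
      ↔ ∃ c : ℝ, ∀ w ∈ B, φ w = c) := by
  obtain rfl : B = openDisc := hB
  rw [closure_openDisc] at hT₁ hT₂ hφ
  have hexpand := integral_add_fderiv_sq hT₁ hT₂ hφ
  rw [integral_mul_fderiv_eq_zero_of_divergence_free hT₁ hT₂ hφ hdiv hbd, mul_zero,
    add_zero] at hexpand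
  have hgrad : 0 ≤ ∫ w in openDisc, (fderiv ℝ φ w (1, 0) ^ 2 + fderiv ℝ φ w (0, 1) ^ 2) :=
    setIntegral_nonneg measurableSet_openDisc fun w _ => by positivity
  refine ⟨by rw [hexpand]; ring, by rw [hexpand]; linarith, ?_⟩
  rw [hexpand, ← integral_fderiv_sq_add_sq_eq_zero_iff hφ]
  constructor <;> intro h <;> linarith
end

section
/- For the Green's function of the Laplacian on the unit disc, the integral of its absolute value is (1-|w|²)/4: for Φ(ζ;w) = (1/2π) log|(ζ-w)/(1-w̄ζ)|, one has ∫∫_B |Φ(ζ;w)| dξdη = (1-|w|²)/4 ≤ 1/4 for each w ∈ B. -/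
open MeasureTheory Real Set Metric Filter
open scoped ENNReal ComplexConjugate

/-!
On the disc `|(ζ - w) / (1 - w̄ζ)| ≤ 1`, so `|Φ| = -Φ` and `-2πΦ = log |1 - w̄ζ| - log |ζ - w|`
for `ζ ≠ w`. The integrand being nonnegative, Tonelli's theorem in polar coordinates needs no
a priori integrability. Over the circle `|ζ| = r < 1` the harmonic term `log |1 - w̄ζ|` averages
to `0` and `log |ζ - w|` averages to `log (max r |w|)`, leaving
`-2π ∫₀¹ r log (max r |w|) dr = π (1 - |w|²) / 2`.
-/

theorem Complex.polarCoord_symm_eq_circleMap (r θ : ℝ) :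
    Complex.polarCoord.symm (r, θ) = circleMap 0 r θ := by
  simp [circleMap, Complex.exp_mul_I]

theorem CircleIntegrable.integrableOn_Ioo_neg_pi_pi {E : Type*} [NormedAddCommGroup E]
    {f : ℂ → E} {c : ℂ} {r : ℝ} (hf : CircleIntegrable f c r) :
    IntegrableOn (fun θ ↦ f (circleMap c r θ)) (Ioo (-π) π) := by
  exact ((((periodic_circleMap c r).comp f).intervalIntegrable₀ two_pi_pos.ne' hf (-π) π).1).mono_set Ioo_subset_Ioc_self

theorem setIntegral_Ioo_circleMap_eq_two_pi_smul_circleAverage {E : Type*} [NormedAddCommGroup E]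
    [NormedSpace ℝ E] (f : ℂ → E) (c : ℂ) (r : ℝ) :
    ∫ θ in Ioo (-π) π, f (circleMap c r θ) = (2 * π) • circleAverage f c r := by
  rw [circleAverage_def, smul_inv_smul₀ two_pi_pos.ne', ← integral_Ioc_eq_integral_Ioo,
    ← intervalIntegral.integral_of_le (by linarith [pi_pos])]
  simpa [two_mul] using ((periodic_circleMap c r).comp f).intervalIntegral_add_eq (-π) 0

theorem lintegral_ball_eq_lintegral_circleMap {f : ℂ → ℝ≥0∞} (hf : Measurable f) (R : ℝ) :
    ∫⁻ z in ball 0 R, f z =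
      ∫⁻ r in Ioo 0 R, ENNReal.ofReal r * ∫⁻ θ in Ioo (-π) π, f (circleMap 0 r θ) := by
  have hslice : ∀ r ∈ Ioi (0 : ℝ), ∫⁻ θ in Ioo (-π) π,
      ENNReal.ofReal r * (ball 0 R).indicator f (circleMap 0 r θ) =
      (Ioo 0 R).indicator
        (fun r ↦ ENNReal.ofReal r * ∫⁻ θ in Ioo (-π) π, f (circleMap 0 r θ)) r := by
    intro r (hr : 0 < r)
    have hmem : ∀ θ, circleMap 0 r θ ∈ ball 0 R ↔ r ∈ Ioo 0 R := fun θ ↦ by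
      simp [mem_ball, norm_circleMap_zero, abs_of_pos hr, hr]
    by_cases hrR : r ∈ Ioo 0 R
    · simp only [indicator_of_mem hrR, indicator_of_mem ((hmem _).2 hrR)]
      exact lintegral_const_mul _ (hf.comp (continuous_circleMap 0 r).measurable)
    · simp [indicator_of_notMem hrR, indicator_of_notMem (mt (hmem _).1 hrR)]
  have hpolar : Continuous fun p : ℝ × ℝ ↦ Complex.polarCoord.symm p := by
    simp only [Complex.polarCoord_symm_apply]
    fun_prop
  have hmeas : Measurable fun p : ℝ × ℝ ↦
      ENNReal.ofReal p.1 • (ball 0 R).indicator f (Complex.polarCoord.symm p) :=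
    measurable_fst.ennreal_ofReal.smul ((hf.indicator measurableSet_ball).comp hpolar.measurable)
  rw [← lintegral_indicator measurableSet_ball, ← Complex.lintegral_comp_polarCoord_symm,
    polarCoord_target, Measure.volume_eq_prod, ← Measure.prod_restrict,
    lintegral_prod _ hmeas.aemeasurable]
  simp only [smul_eq_mul, Complex.polarCoord_symm_eq_circleMap]
  rw [setLIntegral_congr_fun measurableSet_Ioi hslice, lintegral_indicator measurableSet_Ioo,
    Measure.restrict_restrict measurableSet_Ioo, Ioo_inter_Ioi, max_self]

theorem integral_ball_eq_integral_circleAverage_of_nonneg {f : ℂ → ℝ} {R : ℝ} (hf : Measurable f)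
    (hf₀ : ∀ z ∈ ball 0 R, 0 ≤ f z) (hcirc : ∀ r ∈ Ioo 0 R, CircleIntegrable f 0 r)
    (hint : IntegrableOn (fun r ↦ r * circleAverage f 0 r) (Ioo 0 R)) :
    ∫ z in ball 0 R, f z = 2 * π * ∫ r in Ioo 0 R, r * circleAverage f 0 r := by
  have hsphere : ∀ r ∈ Ioo 0 R, ∀ θ, circleMap 0 r θ ∈ ball 0 R := fun r hr θ ↦ by
    simpa [norm_circleMap_zero, abs_of_pos hr.1] using hr.2
  have hslice : ∀ r ∈ Ioo 0 R,
      ENNReal.ofReal r * ∫⁻ θ in Ioo (-π) π, ENNReal.ofReal (f (circleMap 0 r θ)) =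
        ENNReal.ofReal (2 * π * (r * circleAverage f 0 r)) := by
    intro r hr
    rw [← ofReal_integral_eq_lintegral_ofReal (hcirc r hr).integrableOn_Ioo_neg_pi_pi
      (ae_of_all _ fun θ ↦ hf₀ _ (hsphere r hr θ)),
      setIntegral_Ioo_circleMap_eq_two_pi_smul_circleAverage, smul_eq_mul,
      ← ENNReal.ofReal_mul hr.1.le]
    ring_nf
  have hnonneg : ∀ r ∈ Ioo 0 R, 0 ≤ 2 * π * (r * circleAverage f 0 r) := fun r hr ↦
    mul_nonneg two_pi_pos.le (mul_nonneg hr.1.le (circleAverage_nonneg_of_nonneg fun z hz ↦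
      hf₀ z (sphere_subset_ball (by rw [abs_of_pos hr.1]; exact hr.2) hz)))
  rw [integral_eq_lintegral_of_nonneg_ae
      ((ae_restrict_iff' measurableSet_ball).2 (ae_of_all _ hf₀)) hf.aestronglyMeasurable,
    lintegral_ball_eq_lintegral_circleMap hf.ennreal_ofReal,
    setLIntegral_congr_fun measurableSet_Ioo hslice,
    ← ofReal_integral_eq_lintegral_ofReal (hint.const_mul _)
      ((ae_restrict_iff' measurableSet_Ioo).2 (ae_of_all _ hnonneg)),
    ENNReal.toReal_ofReal (setIntegral_nonneg measurableSet_Ioo hnonneg), integral_const_mul]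

theorem Complex.normSq_one_sub_conj_mul_sub_normSq_sub (w z : ℂ) :
    Complex.normSq (1 - conj w * z) - Complex.normSq (z - w) =
      (1 - Complex.normSq w) * (1 - Complex.normSq z) := by
  simp only [Complex.normSq_apply, Complex.sub_re, Complex.sub_im, Complex.mul_re,
    Complex.mul_im, Complex.one_re, Complex.one_im, Complex.conj_re, Complex.conj_im]
  ring

theorem Complex.norm_sub_le_norm_one_sub_conj_mul {w z : ℂ} (hw : ‖w‖ ≤ 1) (hz : ‖z‖ ≤ 1) :
    ‖z - w‖ ≤ ‖1 - conj w * z‖ := by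
  have hw' : Complex.normSq w ≤ 1 := by rw [← Complex.sq_norm]; nlinarith [norm_nonneg w]
  have hz' : Complex.normSq z ≤ 1 := by rw [← Complex.sq_norm]; nlinarith [norm_nonneg z]
  rw [Complex.norm_def, Complex.norm_def]
  apply Real.sqrt_le_sqrt
  nlinarith [Complex.normSq_one_sub_conj_mul_sub_normSq_sub w z]

theorem log_norm_sub_div_one_sub_conj_mul_nonpos {w z : ℂ} (hw : ‖w‖ ≤ 1) (hz : ‖z‖ ≤ 1) :
    log ‖(z - w) / (1 - conj w * z)‖ ≤ 0 := by
  rw [norm_div]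
  exact Real.log_nonpos (by positivity)
    (div_le_one_of_le₀ (Complex.norm_sub_le_norm_one_sub_conj_mul hw hz) (norm_nonneg _))

theorem circleAverage_log_norm_one_sub_mul {a : ℂ} {r : ℝ} (h : ‖a‖ * |r| < 1) :
    circleAverage (fun z ↦ log ‖1 - a * z‖) 0 r = 0 := by
  have hharm : InnerProductSpace.HarmonicOnNhd (fun z ↦ log ‖1 - a * z‖) (closedBall 0 |r|) := by
    intro z hz
    refine AnalyticAt.harmonicAt_log_norm (by fun_prop) (sub_ne_zero.2 fun h1 ↦ ?_)
    have : ‖a * z‖ < 1 := by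
      rw [norm_mul]
      calc ‖a‖ * ‖z‖ ≤ ‖a‖ * |r| := by gcongr; simpa using hz
        _ < 1 := h
    simp [← h1] at this
  simpa using hharm.circleAverage_eq

theorem circleAverage_log_norm_sub_const_zero_eq_log_max {a : ℂ} {r : ℝ} (hr : 0 < r) :
    circleAverage (log ‖· - a‖) 0 r = log (max r ‖a‖) := by
  rw [circleAverage_log_norm_sub_const_eq_log_radius_add_posLog hr.ne', zero_sub, norm_neg,
    posLog_eq_log_max_one (by positivity), ← log_mul hr.ne' (by positivity),
    mul_max_of_nonneg _ _ hr.le, mul_one, mul_inv_cancel_left₀ hr.ne']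

theorem circleAverage_neg_log_norm_sub_div_one_sub_conj_mul {w : ℂ} {r : ℝ} (hr : 0 < r)
    (hwr : ‖w‖ * r < 1) :
    circleAverage (fun z ↦ -log ‖(z - w) / (1 - conj w * z)‖) 0 r = -log (max r ‖w‖) := by
  have hden : ∀ z ∈ sphere (0 : ℂ) |r|, 1 - conj w * z ≠ 0 := fun z hz h ↦ by
    have : ‖conj w * z‖ = ‖w‖ * r := by simp_all [abs_of_pos hr]
    rw [← sub_eq_zero.1 h, norm_one] at this
    linarith
  calc circleAverage (fun z ↦ -log ‖(z - w) / (1 - conj w * z)‖) 0 r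
      = circleAverage (fun z ↦ log ‖1 - conj w * z‖ - log ‖z - w‖) 0 r := by
        refine circleAverage_congr_codiscreteWithin ?_ hr.ne'
        filter_upwards [self_mem_codiscreteWithin _, compl_singleton_mem_codiscreteWithin w]
          with z hz hzw
        rw [norm_div, log_div (by simpa [sub_eq_zero] using hzw) (by simpa using hden z hz),
          neg_sub]
    _ = -log (max r ‖w‖) := by
        rw [circleAverage_fun_sub (MeromorphicOn.circleIntegrable_log_norm fun z _ ↦ by fun_prop)
          (circleIntegrable_log_norm_sub_const r),
          circleAverage_log_norm_one_sub_mul (by simpa [abs_of_pos hr] using hwr),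
          circleAverage_log_norm_sub_const_zero_eq_log_max hr, zero_sub]

theorem hasDerivAt_mul_mul_log_div_two_sub_sq_div_four {x : ℝ} (hx : x ≠ 0) :
    HasDerivAt (fun x ↦ x * (x * log x) / 2 - x ^ 2 / 4) (x * log x) x := by
  refine ((((hasDerivAt_id' x).mul ((hasDerivAt_id' x).mul (hasDerivAt_log hx))).div_const 2).sub
    ((hasDerivAt_pow 2 x).div_const 4)).congr_deriv ?_
  simp only [Pi.mul_apply]
  field_simp
  ring

theorem integral_mul_log_of_nonneg {a b : ℝ} (ha : 0 ≤ a) (hab : a ≤ b) :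
    ∫ x in a..b, x * log x =
      (b * (b * log b) / 2 - b ^ 2 / 4) - (a * (a * log a) / 2 - a ^ 2 / 4) :=
  intervalIntegral.integral_eq_sub_of_hasDerivAt_of_le hab (by fun_prop)
    (fun x hx ↦ hasDerivAt_mul_mul_log_div_two_sub_sq_div_four (ha.trans_lt hx.1).ne')
    (continuous_mul_log.intervalIntegrable a b)

theorem intervalIntegrable_mul_log_max {a : ℝ} (ha₀ : 0 ≤ a) (ha₁ : a ≤ 1) :
    IntervalIntegrable (fun r ↦ r * log (max r a)) volume 0 1 := by
  refine IntervalIntegrable.trans (b := a) ?_ ?_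
  · refine ContinuousOn.intervalIntegrable
      (ContinuousOn.congr (f := fun r ↦ r * log a) (by fun_prop) ?_)
    intro r hr
    rw [uIcc_of_le ha₀] at hr
    simp [max_eq_right hr.2]
  · refine ContinuousOn.intervalIntegrable (ContinuousOn.congr continuous_mul_log.continuousOn ?_)
    intro r hr
    rw [uIcc_of_le ha₁] at hr
    simp [max_eq_left hr.1]

theorem integral_mul_log_max {a : ℝ} (ha₀ : 0 ≤ a) (ha₁ : a ≤ 1) :
    ∫ r in (0 : ℝ)..1, r * log (max r a) = (a ^ 2 - 1) / 4 := by
  have hint := intervalIntegrable_mul_log_max ha₀ ha₁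
  have ha : a ∈ uIcc (0 : ℝ) 1 := by rw [uIcc_of_le zero_le_one]; exact ⟨ha₀, ha₁⟩
  rw [← intervalIntegral.integral_add_adjacent_intervals
    (hint.mono_set (uIcc_subset_uIcc_left ha)) (hint.mono_set (uIcc_subset_uIcc_right ha))]
  have hleft : ∫ r in (0 : ℝ)..a, r * log (max r a) = ∫ r in (0 : ℝ)..a, r * log a :=
    intervalIntegral.integral_congr fun r hr ↦ by
      rw [uIcc_of_le ha₀] at hr
      simp [max_eq_right hr.2]
  have hright : ∫ r in a..1, r * log (max r a) = ∫ r in a..1, r * log r :=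
    intervalIntegral.integral_congr fun r hr ↦ by
      rw [uIcc_of_le ha₁] at hr
      simp [max_eq_left hr.1]
  rw [hleft, hright, intervalIntegral.integral_mul_const, integral_id,
    integral_mul_log_of_nonneg ha₀ ha₁, log_one]
  ring

/- Unlike `log ‖1 - conj w * z‖ - log ‖z - w‖`, this integrand is nonnegative on the whole disc:
at `z = w` it takes the value `-log 0 = 0`. -/
theorem integral_ball_neg_log_norm_sub_div_one_sub_conj_mul {w : ℂ} (hw : ‖w‖ < 1) :
    ∫ z in ball 0 1, -log ‖(z - w) / (1 - conj w * z)‖ = π * (1 - ‖w‖ ^ 2) / 2 := by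
  set f : ℂ → ℝ := fun z ↦ -log ‖(z - w) / (1 - conj w * z)‖
  have havg : ∀ r ∈ Ioo (0 : ℝ) 1, circleAverage f 0 r = -log (max r ‖w‖) := fun r hr ↦
    circleAverage_neg_log_norm_sub_div_one_sub_conj_mul hr.1
      (mul_lt_one_of_nonneg_of_lt_one_left (norm_nonneg w) hw hr.2.le)
  have hradial :
      EqOn (fun r ↦ r * circleAverage f 0 r) (fun r ↦ -(r * log (max r ‖w‖))) (Ioo 0 1) :=
    fun r hr ↦ by simp only [havg r hr, mul_neg]
  have hradial_int : IntegrableOn (fun r ↦ r * circleAverage f 0 r) (Ioo 0 1) :=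
    ((intervalIntegrable_iff_integrableOn_Ioo_of_le zero_le_one).1
      (intervalIntegrable_mul_log_max (norm_nonneg w) hw.le)).neg.congr_fun
      hradial.symm measurableSet_Ioo
  have hf₀ : ∀ z ∈ ball 0 1, 0 ≤ f z := fun z hz ↦
    neg_nonneg.2 (log_norm_sub_div_one_sub_conj_mul_nonpos hw.le (mem_ball_zero_iff.1 hz).le)
  rw [integral_ball_eq_integral_circleAverage_of_nonneg (by fun_prop) hf₀
      (fun r _ ↦ (MeromorphicOn.circleIntegrable_log_norm fun z _ ↦ by fun_prop).neg) hradial_int,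
    setIntegral_congr_fun measurableSet_Ioo hradial, integral_neg, ← integral_Ioc_eq_integral_Ioo,
    ← intervalIntegral.integral_of_le zero_le_one, integral_mul_log_max (norm_nonneg w) hw.le]
  ring

/-- For the Green kernel `Φ(ζ;w) = (1/2π) log|(ζ-w)/(1-w̄ζ)|` of the Laplacian
on the unit disc, `∫∫_B |Φ(ζ;w)| dξdη = (1-|w|²)/4 ≤ 1/4`. -/
theorem green_kernel_abs_integral (w : ℂ) (hw : w ∈ Metric.ball (0 : ℂ) 1) :
    ((∫ ζ in Metric.ball (0 : ℂ) 1,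
        |(1 / (2 * Real.pi)) *
          Real.log ‖(ζ - w) / (1 - (starRingEnd ℂ) w * ζ)‖|)
      = (1 - ‖w‖ ^ 2) / 4)
    ∧ ((∫ ζ in Metric.ball (0 : ℂ) 1,
        |(1 / (2 * Real.pi)) *
          Real.log ‖(ζ - w) / (1 - (starRingEnd ℂ) w * ζ)‖|)
      ≤ 1 / 4) := by
  have hw₁ : ‖w‖ < 1 := mem_ball_zero_iff.1 hw
  have habs : ∀ ζ ∈ ball (0 : ℂ) 1, |(1 / (2 * π)) * log ‖(ζ - w) / (1 - conj w * ζ)‖| =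
      (2 * π)⁻¹ * -log ‖(ζ - w) / (1 - conj w * ζ)‖ := fun ζ hζ ↦ by
    rw [abs_mul, abs_of_pos (by positivity), one_div, abs_of_nonpos
      (log_norm_sub_div_one_sub_conj_mul_nonpos hw₁.le (mem_ball_zero_iff.1 hζ).le)]
  have hvalue : ∫ ζ in ball (0 : ℂ) 1, |(1 / (2 * π)) * log ‖(ζ - w) / (1 - conj w * ζ)‖| =
      (1 - ‖w‖ ^ 2) / 4 := by
    rw [setIntegral_congr_fun measurableSet_ball habs, integral_const_mul,
      integral_ball_neg_log_norm_sub_div_one_sub_conj_mul hw₁]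
    field_simp
    ring
  exact ⟨hvalue, hvalue ▸ by linarith [sq_nonneg ‖w‖]⟩
end

section
/- Quadratic growth estimate for the Grassmann torsion potential: if τ^{(σθ)} : B → ℝ, 1 ≤ σ,θ ≤ n, are C¹ functions with τ^{(σθ)} = -τ^{(θσ)}, and δτ^{(σθ)} := Σ_{ω=1}^n det(∇τ^{(σω)}, ∇τ^{(ωθ)}), then with 𝒯 := (τ^{(σθ)})_{σ<θ} ∈ ℝ^{n(n-1)/2} one has |δ𝒯| ≤ √(n-2) |𝒯_u||𝒯_v| ≤ (√(n-2)/2)|∇𝒯|², where |δ𝒯|² = Σ_{σ<θ}(δτ^{(σθ)})². -/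
/-!
Put `a = 𝒯_u`, `b = 𝒯_v`; these are skew matrices and `δ𝒯` is their commutator `ab - ba`.
For `σ ≠ θ` the summand `a_{σω} b_{ωθ} - b_{σω} a_{ωθ}` of `δτ^{(σθ)}` vanishes at `ω = σ` and
`ω = θ`, so Cauchy–Schwarz over the remaining `n - 2` indices gives
`(δτ^{(σθ)})² ≤ (n - 2) Σ_ω (a_{σω} b_{ωθ} - b_{σω} a_{ωθ})²`. Up to sign, each of these summands
is `a_p b_q - a_q b_p` for the two edges `p = {σ, ω}`, `q = {ω, θ}` of the path `σ - ω - θ`, and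
distinct paths have distinct pairs of edges. Hence the double sum is at most
`Σ_{p < q} (a_p b_q - a_q b_p)² = |a|² |b|² - ⟨a, b⟩²` by Lagrange's identity. The second
inequality is AM–GM.
-/

open Finset Function

lemma sum_sum_mul_sub_mul_sq {κ R : Type*} [CommRing R] (s : Finset κ) (f g : κ → R) :
    ∑ p ∈ s, ∑ q ∈ s, (f p * g q - f q * g p) ^ 2
      = 2 * ((∑ p ∈ s, f p ^ 2) * (∑ p ∈ s, g p ^ 2) - (∑ p ∈ s, f p * g p) ^ 2) := by
  have expand : ∀ p q, (f p * g q - f q * g p) ^ 2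
      = f p ^ 2 * g q ^ 2 + g p ^ 2 * f q ^ 2 - 2 * (f p * g p) * (f q * g q) := by
    intro p q; ring
  simp_rw [expand, sum_sub_distrib, sum_add_distrib, ← mul_sum, ← sum_mul]
  rw [← mul_sum]
  ring

lemma sq_sum_le_card_sub_two_mul_sum_sq {ι : Type*} [Fintype ι] [DecidableEq ι]
    {f : ι → ℝ} {i j : ι} (hij : i ≠ j) (hi : f i = 0) (hj : f j = 0) :
    (∑ k, f k) ^ 2 ≤ (Fintype.card ι - 2) * ∑ k, f k ^ 2 := by
  have hsupp : ∑ k ∈ univ \ {i, j}, f k = ∑ k, f k :=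
    sum_subset sdiff_subset fun k _ hk => by
      obtain rfl | rfl : k = i ∨ k = j := by
        simp only [mem_sdiff, mem_univ, true_and, mem_insert, mem_singleton, not_not] at hk
        exact hk
      exacts [hi, hj]
  have hcard : (#(univ \ {i, j}) : ℝ) = Fintype.card ι - 2 := by
    rw [card_univ_sdiff, Nat.cast_sub (card_le_univ _), card_pair hij, Nat.cast_two]
  calc (∑ k, f k) ^ 2 = (∑ k ∈ univ \ {i, j}, f k) ^ 2 := by rw [hsupp]
    _ ≤ #(univ \ {i, j}) * ∑ k ∈ univ \ {i, j}, f k ^ 2 := sq_sum_le_card_mul_sum_sq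
    _ ≤ (Fintype.card ι - 2) * ∑ k, f k ^ 2 := by
      rw [hcard]
      exact mul_le_mul_of_nonneg_left
        (sum_le_sum_of_subset_of_nonneg sdiff_subset fun k _ _ => sq_nonneg _)
        (hcard ▸ Nat.cast_nonneg _)

lemma sqrt_mul_sqrt_le_add_div_two {x y : ℝ} (hx : 0 ≤ x) (hy : 0 ≤ y) :
    √x * √y ≤ (x + y) / 2 := by
  have := two_mul_le_add_sq √x √y
  rw [Real.sq_sqrt hx, Real.sq_sqrt hy] at this
  linarith

variable {ι : Type*}

/-- The `k`-th summand of the commutator entry `(a * b - b * a) i j`; for `a = 𝒯_u`, `b = 𝒯_v`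
it is `det(∇τ^{(ik)}, ∇τ^{(kj)})`. -/
def lieTerm (a b : ι → ι → ℝ) (i j k : ι) : ℝ := a i k * b k j - b i k * a k j

section Skew

variable {a b : ι → ι → ℝ} (ha : ∀ i j, a i j = -a j i) (hb : ∀ i j, b i j = -b j i)
include ha hb

lemma lieTerm_swap (i j k : ι) : lieTerm a b j i k = -lieTerm a b i j k := by
  simp only [lieTerm]
  rw [ha i k, hb i k, ha k j, hb k j]
  ring

lemma lieTerm_self (i k : ι) : lieTerm a b i i k = 0 := by
  linarith [lieTerm_swap ha hb i i k]

lemma lieTerm_self_left (i j : ι) : lieTerm a b i j i = 0 := by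
  simp only [lieTerm]
  rw [self_eq_neg.mp (ha i i), self_eq_neg.mp (hb i i)]
  ring

lemma lieTerm_self_right (i j : ι) : lieTerm a b i j j = 0 := by
  rw [← neg_eq_zero, ← lieTerm_swap ha hb, lieTerm_self_left ha hb]

end Skew

variable [LinearOrder ι]

def sortPair (x y : ι) : ι × ι := (min x y, max x y)

lemma sortPair_eq_sortPair_iff {x y x' y' : ι} :
    sortPair x y = sortPair x' y' ↔ x = x' ∧ y = y' ∨ x = y' ∧ y = x' := by
  simp only [sortPair, Prod.mk.injEq]
  constructor
  · intro h
    rcases le_total x y with h1 | h1 <;> rcases le_total x' y' with h2 | h2 <;> simp_all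
  · rintro (⟨rfl, rfl⟩ | ⟨rfl, rfl⟩)
    · simp
    · exact ⟨min_comm _ _, max_comm _ _⟩

lemma uncurry_sortPair {a : ι → ι → ℝ} (ha : ∀ i j, a i j = -a j i) (x y : ι) :
    uncurry a (sortPair x y) = (if x ≤ y then 1 else -1) * a x y := by
  by_cases h : x ≤ y
  · simp [sortPair, h]
  · simp [sortPair, h, (not_le.mp h).le, ha y x]

lemma wedge_sortPair_sq {a b : ι → ι → ℝ} (ha : ∀ i j, a i j = -a j i)
    (hb : ∀ i j, b i j = -b j i) (x y z w : ι) :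
    (uncurry a (sortPair x y) * uncurry b (sortPair z w)
        - uncurry a (sortPair z w) * uncurry b (sortPair x y)) ^ 2
      = (a x y * b z w - a z w * b x y) ^ 2 := by
  simp only [uncurry_sortPair ha, uncurry_sortPair hb]
  split_ifs <;> ring

/-- The two edges `{i, k}` and `{k, j}` of the path `i - k - j`, for `x = (i, j, k)`. -/
def pathEdges (x : ι × ι × ι) : (ι × ι) × (ι × ι) := (sortPair x.1 x.2.2, sortPair x.2.2 x.2.1)

variable [Fintype ι]

variable (ι) in
def ltPairs : Finset (ι × ι) := univ.filter fun p => p.1 < p.2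

variable (ι) in
def distinctTriples : Finset (ι × ι × ι) :=
  univ.filter fun x => x.1 ≠ x.2.1 ∧ x.2.2 ≠ x.1 ∧ x.2.2 ≠ x.2.1

def skewNormSq (a : ι → ι → ℝ) : ℝ := ∑ i, ∑ j, if i < j then a i j ^ 2 else 0

@[simp]
lemma mem_ltPairs {p : ι × ι} : p ∈ ltPairs ι ↔ p.1 < p.2 := by
  simp [ltPairs]

lemma sortPair_mem_ltPairs {x y : ι} (h : x ≠ y) : sortPair x y ∈ ltPairs ι := by
  simpa [sortPair] using h.symm

lemma pathEdges_mem_ltPairs_product {x : ι × ι × ι} (hx : x ∈ distinctTriples ι) :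
    pathEdges x ∈ ltPairs ι ×ˢ ltPairs ι := by
  simp only [distinctTriples, mem_filter, mem_univ, true_and] at hx
  exact mem_product.mpr ⟨sortPair_mem_ltPairs hx.2.1.symm, sortPair_mem_ltPairs hx.2.2⟩

lemma injOn_pathEdges : Set.InjOn pathEdges (distinctTriples ι : Set (ι × ι × ι)) := by
  rintro ⟨i, j, k⟩ hx ⟨i', j', k'⟩ hx' h
  simp only [distinctTriples, coe_filter, mem_univ, true_and, Set.mem_ofPred_eq] at hx hx'
  simp only [pathEdges, Prod.mk.injEq, sortPair_eq_sortPair_iff] at h ⊢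
  grind

lemma sum_ltPairs {M : Type*} [AddCommMonoid M] (f : ι → ι → M) :
    ∑ p ∈ ltPairs ι, f p.1 p.2 = ∑ i, ∑ j, if i < j then f i j else 0 := by
  rw [ltPairs, sum_filter, ← univ_product_univ, sum_product]

lemma sum_sum_eq_two_mul_sum_ltPairs {f : ι → ι → ℝ} (hsymm : ∀ i j, f i j = f j i)
    (hdiag : ∀ i, f i i = 0) :
    ∑ i, ∑ j, f i j = 2 * ∑ p ∈ ltPairs ι, f p.1 p.2 := by
  have split : ∀ i j, f i j = (if i < j then f i j else 0) + (if j < i then f j i else 0) := by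
    intro i j
    rcases lt_trichotomy i j with h | rfl | h
    · simp [h, h.not_gt]
    · simp [hdiag]
    · simp [h, h.not_gt, hsymm i j]
  have swap : ∑ i, ∑ j, (if i < j then f i j else 0) = ∑ i, ∑ j, if j < i then f j i else 0 :=
    sum_comm
  rw [sum_ltPairs, two_mul]
  nth_rw 2 [swap]
  rw [← sum_add_distrib]
  refine sum_congr rfl fun i _ => ?_
  rw [← sum_add_distrib]
  exact sum_congr rfl fun j _ => split i j

lemma skewNormSq_eq_sum_ltPairs (a : ι → ι → ℝ) :
    skewNormSq a = ∑ p ∈ ltPairs ι, a p.1 p.2 ^ 2 :=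
  (sum_ltPairs fun i j => a i j ^ 2).symm

lemma skewNormSq_nonneg (a : ι → ι → ℝ) : 0 ≤ skewNormSq a :=
  skewNormSq_eq_sum_ltPairs a ▸ sum_nonneg fun _ _ => sq_nonneg _

section Skew

variable {a b : ι → ι → ℝ} (ha : ∀ i j, a i j = -a j i) (hb : ∀ i j, b i j = -b j i)
include ha hb

lemma two_mul_sum_ltPairs_sum_lieTerm_sq :
    2 * ∑ p ∈ ltPairs ι, ∑ k, lieTerm a b p.1 p.2 k ^ 2
      = ∑ x ∈ distinctTriples ι, lieTerm a b x.1 x.2.1 x.2.2 ^ 2 := by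
  have hsupp : ∑ x ∈ distinctTriples ι, lieTerm a b x.1 x.2.1 x.2.2 ^ 2
      = ∑ x : ι × ι × ι, lieTerm a b x.1 x.2.1 x.2.2 ^ 2 := by
    refine sum_filter_of_ne fun x _ hx => ?_
    obtain ⟨i, j, k⟩ := x
    dsimp only at hx ⊢
    refine ⟨?_, ?_, ?_⟩ <;> rintro rfl <;>
      simp [lieTerm_self ha hb, lieTerm_self_left ha hb, lieTerm_self_right ha hb] at hx
  rw [hsupp]
  simp_rw [Fintype.sum_prod_type]
  refine (sum_sum_eq_two_mul_sum_ltPairs (f := fun i j => ∑ k, lieTerm a b i j k ^ 2)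
    (fun i j => sum_congr rfl fun k _ => ?_) fun i => sum_eq_zero fun k _ => ?_).symm
  · rw [lieTerm_swap ha hb, neg_sq]
  · rw [lieTerm_self ha hb, sq, zero_mul]

lemma sum_ltPairs_sum_lieTerm_sq_le :
    ∑ p ∈ ltPairs ι, ∑ k, lieTerm a b p.1 p.2 k ^ 2 ≤ skewNormSq a * skewNormSq b := by
  set g : (ι × ι) × (ι × ι) → ℝ := fun y =>
    (uncurry a y.1 * uncurry b y.2 - uncurry a y.2 * uncurry b y.1) ^ 2 with hg
  have hlagrange : ∑ y ∈ ltPairs ι ×ˢ ltPairs ι, g y = 2 * (skewNormSq a * skewNormSq b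
      - (∑ p ∈ ltPairs ι, a p.1 p.2 * b p.1 p.2) ^ 2) := by
    rw [sum_product, skewNormSq_eq_sum_ltPairs, skewNormSq_eq_sum_ltPairs]
    exact sum_sum_mul_sub_mul_sq _ _ _
  -- The factor `2` counts both orders of `(i, j)` on the left and of `(p, q)` on the right.
  have hpaths : 2 * ∑ p ∈ ltPairs ι, ∑ k, lieTerm a b p.1 p.2 k ^ 2
      ≤ ∑ y ∈ ltPairs ι ×ˢ ltPairs ι, g y := by
    calc 2 * ∑ p ∈ ltPairs ι, ∑ k, lieTerm a b p.1 p.2 k ^ 2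
        = ∑ x ∈ distinctTriples ι, g (pathEdges x) := by
          rw [two_mul_sum_ltPairs_sum_lieTerm_sq ha hb]
          refine sum_congr rfl fun x _ => ?_
          simp only [lieTerm, hg, pathEdges]
          rw [wedge_sortPair_sq ha hb]
          ring
      _ = ∑ y ∈ (distinctTriples ι).image pathEdges, g y := (sum_image injOn_pathEdges).symm
      _ ≤ ∑ y ∈ ltPairs ι ×ˢ ltPairs ι, g y :=
          sum_le_sum_of_subset_of_nonneg
            (image_subset_iff.mpr fun _ => pathEdges_mem_ltPairs_product)
            fun _ _ _ => sq_nonneg _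
  linarith [sq_nonneg (∑ p ∈ ltPairs ι, a p.1 p.2 * b p.1 p.2)]

theorem skewNormSq_commutator_le (h2 : 2 ≤ Fintype.card ι) :
    skewNormSq (fun i j => ∑ k, lieTerm a b i j k)
      ≤ (Fintype.card ι - 2) * (skewNormSq a * skewNormSq b) := by
  have hn2 : (0 : ℝ) ≤ Fintype.card ι - 2 := by
    rw [sub_nonneg]; exact_mod_cast h2
  calc skewNormSq (fun i j => ∑ k, lieTerm a b i j k)
      ≤ ∑ p ∈ ltPairs ι, (Fintype.card ι - 2) * ∑ k, lieTerm a b p.1 p.2 k ^ 2 := by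
        rw [skewNormSq_eq_sum_ltPairs]
        exact sum_le_sum fun p hp => sq_sum_le_card_sub_two_mul_sum_sq (mem_ltPairs.mp hp).ne
          (lieTerm_self_left ha hb _ _) (lieTerm_self_right ha hb _ _)
    _ ≤ (Fintype.card ι - 2) * (skewNormSq a * skewNormSq b) := by
        rw [← mul_sum]
        exact mul_le_mul_of_nonneg_left (sum_ltPairs_sum_lieTerm_sq_le ha hb) hn2

theorem sqrt_skewNormSq_commutator_le (h2 : 2 ≤ Fintype.card ι) :
    √(skewNormSq fun i j => ∑ k, lieTerm a b i j k)
      ≤ √(Fintype.card ι - 2) * (√(skewNormSq a) * √(skewNormSq b)) := by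
  rw [← Real.sqrt_mul (skewNormSq_nonneg a),
    ← Real.sqrt_mul (by rw [sub_nonneg]; exact_mod_cast h2)]
  exact Real.sqrt_le_sqrt (skewNormSq_commutator_le ha hb h2)

end Skew

theorem grassmann_quadratic_growth_general {n : ℕ} (hn : 2 ≤ n)
    (B : Set (ℝ × ℝ))
    (τ : Fin n → Fin n → ℝ × ℝ → ℝ)
    (hskew : ∀ (σ θ : Fin n) (w : ℝ × ℝ), τ σ θ w = - τ θ σ w) :
    ∀ w ∈ B,
      (Real.sqrt (∑ σ : Fin n, ∑ θ : Fin n, if σ < θ then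
          (∑ ω : Fin n,
            (fderiv ℝ (τ σ ω) w (1, 0) * fderiv ℝ (τ ω θ) w (0, 1)
              - fderiv ℝ (τ σ ω) w (0, 1) * fderiv ℝ (τ ω θ) w (1, 0))) ^ 2
          else 0)
        ≤ Real.sqrt ((n : ℝ) - 2) *
            (Real.sqrt (∑ σ : Fin n, ∑ θ : Fin n,
                if σ < θ then (fderiv ℝ (τ σ θ) w (1, 0)) ^ 2 else 0) *
             Real.sqrt (∑ σ : Fin n, ∑ θ : Fin n,
                if σ < θ then (fderiv ℝ (τ σ θ) w (0, 1)) ^ 2 else 0)))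
      ∧ (Real.sqrt ((n : ℝ) - 2) *
            (Real.sqrt (∑ σ : Fin n, ∑ θ : Fin n,
                if σ < θ then (fderiv ℝ (τ σ θ) w (1, 0)) ^ 2 else 0) *
             Real.sqrt (∑ σ : Fin n, ∑ θ : Fin n,
                if σ < θ then (fderiv ℝ (τ σ θ) w (0, 1)) ^ 2 else 0))
        ≤ (Real.sqrt ((n : ℝ) - 2) / 2) *
            ((∑ σ : Fin n, ∑ θ : Fin n,
                if σ < θ then (fderiv ℝ (τ σ θ) w (1, 0)) ^ 2 else 0)
              + (∑ σ : Fin n, ∑ θ : Fin n,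
                if σ < θ then (fderiv ℝ (τ σ θ) w (0, 1)) ^ 2 else 0))) := by
  intro w _
  set u : Fin n → Fin n → ℝ := fun σ θ => fderiv ℝ (τ σ θ) w (1, 0)
  set v : Fin n → Fin n → ℝ := fun σ θ => fderiv ℝ (τ σ θ) w (0, 1)
  have hfd : ∀ σ θ, fderiv ℝ (τ σ θ) w = -fderiv ℝ (τ θ σ) w := fun σ θ => by
    rw [show τ σ θ = fun z => -τ θ σ z from funext (hskew σ θ), fderiv_fun_neg]
  have hu : ∀ σ θ, u σ θ = -u θ σ := fun σ θ => by simp [u, hfd σ θ]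
  have hv : ∀ σ θ, v σ θ = -v θ σ := fun σ θ => by simp [v, hfd σ θ]
  have key := sqrt_skewNormSq_commutator_le hu hv (by simpa using hn)
  rw [Fintype.card_fin] at key
  have amgm : √((n : ℝ) - 2) * (√(skewNormSq u) * √(skewNormSq v))
      ≤ √((n : ℝ) - 2) / 2 * (skewNormSq u + skewNormSq v) := by
    rw [div_mul_eq_mul_div, mul_div_assoc]
    exact mul_le_mul_of_nonneg_left
      (sqrt_mul_sqrt_le_add_div_two (skewNormSq_nonneg u) (skewNormSq_nonneg v))
      (Real.sqrt_nonneg _)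
  exact ⟨key, amgm⟩

/-- Quadratic growth estimate for the Grassmann torsion potential: for skew
families `τ^{(σθ)}` of `C¹` functions on the unit disc, with
`δτ^{(σθ)} = Σ_ω det(∇τ^{(σω)}, ∇τ^{(ωθ)})`, one has
`|δ𝒯| ≤ √(n-2)|𝒯_u||𝒯_v| ≤ (√(n-2)/2)|∇𝒯|²` pointwise. -/
theorem grassmann_quadratic_growth {n : ℕ} (hn : 2 ≤ n)
    (B : Set (ℝ × ℝ)) (hB : B = {p : ℝ × ℝ | p.1 ^ 2 + p.2 ^ 2 < 1})
    (τ : Fin n → Fin n → ℝ × ℝ → ℝ)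
    (hdiff : ∀ σ θ : Fin n, DifferentiableOn ℝ (τ σ θ) B)
    (hskew : ∀ (σ θ : Fin n) (w : ℝ × ℝ), τ σ θ w = - τ θ σ w) :
    ∀ w ∈ B,
      (Real.sqrt (∑ σ : Fin n, ∑ θ : Fin n, if σ < θ then
          (∑ ω : Fin n,
            (fderiv ℝ (τ σ ω) w (1, 0) * fderiv ℝ (τ ω θ) w (0, 1)
              - fderiv ℝ (τ σ ω) w (0, 1) * fderiv ℝ (τ ω θ) w (1, 0))) ^ 2
          else 0)
        ≤ Real.sqrt ((n : ℝ) - 2) *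
            (Real.sqrt (∑ σ : Fin n, ∑ θ : Fin n,
                if σ < θ then (fderiv ℝ (τ σ θ) w (1, 0)) ^ 2 else 0) *
             Real.sqrt (∑ σ : Fin n, ∑ θ : Fin n,
                if σ < θ then (fderiv ℝ (τ σ θ) w (0, 1)) ^ 2 else 0)))
      ∧ (Real.sqrt ((n : ℝ) - 2) *
            (Real.sqrt (∑ σ : Fin n, ∑ θ : Fin n,
                if σ < θ then (fderiv ℝ (τ σ θ) w (1, 0)) ^ 2 else 0) *
             Real.sqrt (∑ σ : Fin n, ∑ θ : Fin n,
                if σ < θ then (fderiv ℝ (τ σ θ) w (0, 1)) ^ 2 else 0))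
        ≤ (Real.sqrt ((n : ℝ) - 2) / 2) *
            ((∑ σ : Fin n, ∑ θ : Fin n,
                if σ < θ then (fderiv ℝ (τ σ θ) w (1, 0)) ^ 2 else 0)
              + (∑ σ : Fin n, ∑ θ : Fin n,
                if σ < θ then (fderiv ℝ (τ σ θ) w (0, 1)) ^ 2 else 0))) :=
  grassmann_quadratic_growth_general hn B τ hskew
end
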